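/- arXiv:0912.3295 — 2 statements merged into one kernel-verified Lean document; each statement's English description precedes it below -/
import Mathlib

section
/- Let X and Y be real-valued random variables on a probability space. The Rényi maximal correlation R(X,Y), defined as the supremum of the Pearson correlations corr(f(X), g(Y)) over all Borel measurable functions f, g with f(X) ∈ L² and g(Y) ∈ L² and with Var f(X) > 0 and Var g(Y) > 0, equals 0 if and only if X and Y are independent. -/
/-!
Independence makes every covariance `cov[f ∘ X, g ∘ Y]` vanish, so every correlation in the
supremum is `0`. Conversely, if `X` and `Y` are dependent there are Borel sets `s`, `t` with
`P(X ∈ s, Y ∈ t) ≠ P(X ∈ s) P(Y ∈ t)`, i.e. the indicators `1_s ∘ X` and `1_t ∘ Y` have nonzero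
covariance; replacing `1_s` by `-1_s` if necessary gives a strictly positive correlation, so
`R(X, Y) > 0`. Cauchy–Schwarz, `cov[U, V]² ≤ Var[U] Var[V]`, both bounds the correlations by `1`,
so that the supremum is finite, and forces the variances of the indicators to be positive.
-/

open MeasureTheory ProbabilityTheory

/-- Pearson correlation of two real random variables. -/
noncomputable def pearsonCorr {Ω : Type*} [MeasureSpace Ω] (U V : Ω → ℝ) : ℝ :=
  (∫ ω, (U ω - ∫ ω', U ω') * (V ω - ∫ ω', V ω')) /
    (Real.sqrt Var[U] * Real.sqrt Var[V])

/-- Rényi maximal correlation: supremum of Pearson correlations of `f ∘ X` and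
`g ∘ Y` over Borel measurable `f, g` with `f ∘ X, g ∘ Y ∈ L²` of positive variance. -/
noncomputable def renyiCorr {Ω : Type*} [MeasureSpace Ω] (X Y : Ω → ℝ) : ℝ :=
  sSup {r : ℝ | ∃ f g : ℝ → ℝ, Measurable f ∧ Measurable g ∧
    MemLp (fun ω => f (X ω)) 2 ℙ ∧ MemLp (fun ω => g (Y ω)) 2 ℙ ∧
    0 < Var[fun ω => f (X ω)] ∧ 0 < Var[fun ω => g (Y ω)] ∧
    r = pearsonCorr (fun ω => f (X ω)) (fun ω => g (Y ω))}

namespace ProbabilityTheory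

variable {Ω : Type*} {mΩ : MeasurableSpace Ω} {μ : Measure Ω} {X Y : Ω → ℝ}

lemma covariance_sq_le_variance_mul [IsFiniteMeasure μ] (hX : MemLp X 2 μ) (hY : MemLp Y 2 μ) :
    cov[X, Y; μ] ^ 2 ≤ Var[X; μ] * Var[Y; μ] := by
  have hquad : ∀ t : ℝ, 0 ≤ Var[X; μ] * (t * t) + 2 * cov[X, Y; μ] * t + Var[Y; μ] := by
    intro t
    have h := variance_nonneg (t • X + Y) μ
    rw [variance_add (hX.const_smul t) hY, variance_smul, covariance_smul_left] at h
    linarith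
  have := discrim_le_zero hquad
  rw [discrim] at this
  nlinarith

lemma variance_pos_of_covariance_ne_zero [IsFiniteMeasure μ] (hX : MemLp X 2 μ)
    (hY : MemLp Y 2 μ) (h : cov[X, Y; μ] ≠ 0) : 0 < Var[X; μ] ∧ 0 < Var[Y; μ] := by
  have hprod : 0 < Var[X; μ] * Var[Y; μ] :=
    (pow_two_pos_of_ne_zero h).trans_le (covariance_sq_le_variance_mul hX hY)
  exact (pos_and_pos_or_neg_and_neg_of_mul_pos hprod).resolve_right
    fun hneg => (variance_nonneg X μ).not_gt hneg.1

lemma memLp_indicator_one [IsFiniteMeasure μ] {A : Set Ω} (hA : MeasurableSet A) (p : ENNReal) :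
    MemLp (A.indicator (1 : Ω → ℝ)) p μ :=
  memLp_indicator_const p hA 1 (.inr (measure_ne_top _ _))

lemma covariance_indicator_one [IsProbabilityMeasure μ] {A B : Set Ω} (hA : MeasurableSet A)
    (hB : MeasurableSet B) :
    cov[A.indicator 1, B.indicator 1; μ] = μ.real (A ∩ B) - μ.real A * μ.real B := by
  rw [covariance_eq_sub (memLp_indicator_one hA 2) (memLp_indicator_one hB 2),
    ← Set.inter_indicator_one,
    integral_indicator_one (hA.inter hB), integral_indicator_one hA, integral_indicator_one hB]

lemma indepFun_of_covariance_indicator_preimage_eq_zero [IsProbabilityMeasure μ]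
    {α β : Type*} [MeasurableSpace α] [MeasurableSpace β] {X : Ω → α} {Y : Ω → β}
    (hX : Measurable X) (hY : Measurable Y)
    (h : ∀ s t, MeasurableSet s → MeasurableSet t →
      cov[(X ⁻¹' s).indicator 1, (Y ⁻¹' t).indicator 1; μ] = 0) :
    X ⟂ᵢ[μ] Y := by
  rw [indepFun_iff_measure_inter_preimage_eq_mul]
  intro s t hs ht
  have hreal := h s t hs ht
  rw [covariance_indicator_one (hX hs) (hY ht), sub_eq_zero, measureReal_def, measureReal_def,
    measureReal_def, ← ENNReal.toReal_mul] at hreal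
  exact (ENNReal.toReal_eq_toReal_iff' (measure_ne_top _ _)
    (ENNReal.mul_ne_top (measure_ne_top _ _) (measure_ne_top _ _))).mp hreal

end ProbabilityTheory

section Correlation

variable {Ω : Type*} [MeasureSpace Ω] {U V : Ω → ℝ}

lemma pearsonCorr_eq_covariance_div :
    pearsonCorr U V = cov[U, V] / (√Var[U] * √Var[V]) := rfl

lemma pearsonCorr_le_one [IsFiniteMeasure (ℙ : Measure Ω)] (hU : MemLp U 2 ℙ)
    (hV : MemLp V 2 ℙ) : pearsonCorr U V ≤ 1 := by
  rw [pearsonCorr_eq_covariance_div, ← Real.sqrt_mul (variance_nonneg U ℙ)]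
  exact div_le_one_of_le₀ ((le_abs_self _).trans
    (Real.abs_le_sqrt (covariance_sq_le_variance_mul hU hV))) (Real.sqrt_nonneg _)

lemma pearsonCorr_pos_of_covariance_pos [IsFiniteMeasure (ℙ : Measure Ω)] (hU : MemLp U 2 ℙ)
    (hV : MemLp V 2 ℙ) (h : 0 < cov[U, V]) : 0 < pearsonCorr U V := by
  obtain ⟨hVarU, hVarV⟩ := variance_pos_of_covariance_ne_zero hU hV h.ne'
  exact div_pos h (mul_pos (Real.sqrt_pos.mpr hVarU) (Real.sqrt_pos.mpr hVarV))

lemma ProbabilityTheory.IndepFun.pearsonCorr_eq_zero (h : IndepFun U V ℙ) (hU : MemLp U 2 ℙ)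
    (hV : MemLp V 2 ℙ) : pearsonCorr U V = 0 := by
  rw [pearsonCorr_eq_covariance_div, h.covariance_eq_zero hU hV, zero_div]

end Correlation

section RenyiCorrelation

variable {Ω : Type*} [MeasureSpace Ω] {X Y : Ω → ℝ}

lemma pearsonCorr_le_renyiCorr [IsFiniteMeasure (ℙ : Measure Ω)] {f g : ℝ → ℝ}
    (hf : Measurable f) (hg : Measurable g) (hfX : MemLp (fun ω => f (X ω)) 2 ℙ)
    (hgY : MemLp (fun ω => g (Y ω)) 2 ℙ) (hVarf : 0 < Var[fun ω => f (X ω)])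
    (hVarg : 0 < Var[fun ω => g (Y ω)]) :
    pearsonCorr (fun ω => f (X ω)) (fun ω => g (Y ω)) ≤ renyiCorr X Y := by
  refine le_csSup ⟨1, ?_⟩ ⟨f, g, hf, hg, hfX, hgY, hVarf, hVarg, rfl⟩
  rintro r ⟨f', g', -, -, hf'X, hg'Y, -, -, rfl⟩
  exact pearsonCorr_le_one hf'X hg'Y

lemma renyiCorr_pos_of_covariance_ne_zero [IsFiniteMeasure (ℙ : Measure Ω)] {f g : ℝ → ℝ}
    (hf : Measurable f) (hg : Measurable g) (hfX : MemLp (fun ω => f (X ω)) 2 ℙ)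
    (hgY : MemLp (fun ω => g (Y ω)) 2 ℙ)
    (hcov : cov[fun ω => f (X ω), fun ω => g (Y ω)] ≠ 0) : 0 < renyiCorr X Y := by
  obtain ⟨hVarf, hVarg⟩ := variance_pos_of_covariance_ne_zero hfX hgY hcov
  rcases hcov.lt_or_gt with hneg | hpos
  · have hcov_neg : 0 < cov[fun ω => -f (X ω), fun ω => g (Y ω)] := by
      rw [covariance_fun_neg_left]; exact neg_pos.mpr hneg
    refine (pearsonCorr_pos_of_covariance_pos hfX.neg hgY hcov_neg).trans_le ?_
    exact pearsonCorr_le_renyiCorr (f := fun x => -f x) hf.neg hg hfX.neg hgY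
      (by rwa [variance_fun_neg]) hVarg
  · exact (pearsonCorr_pos_of_covariance_pos hfX hgY hpos).trans_le
      (pearsonCorr_le_renyiCorr hf hg hfX hgY hVarf hVarg)

lemma renyiCorr_eq_zero_of_indepFun (h : IndepFun X Y ℙ) : renyiCorr X Y = 0 := by
  refine le_antisymm (Real.sSup_nonpos ?_) (Real.sSup_nonneg ?_)
  · rintro _ ⟨f, g, hf, hg, hfX, hgY, -, -, rfl⟩
    exact ((h.comp hf hg).pearsonCorr_eq_zero hfX hgY).le
  · rintro _ ⟨f, g, hf, hg, hfX, hgY, -, -, rfl⟩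
    exact ((h.comp hf hg).pearsonCorr_eq_zero hfX hgY).ge

end RenyiCorrelation

/-- The Rényi maximal correlation vanishes iff `X` and `Y` are independent. -/
theorem renyiCorr_eq_zero_iff_indepFun {Ω : Type*} [MeasureSpace Ω]
    [IsProbabilityMeasure (ℙ : Measure Ω)] (X Y : Ω → ℝ)
    (hX : Measurable X) (hY : Measurable Y) :
    renyiCorr X Y = 0 ↔ IndepFun X Y ℙ := by
  refine ⟨fun hR => ?_, renyiCorr_eq_zero_of_indepFun⟩
  refine indepFun_of_covariance_indicator_preimage_eq_zero hX hY fun s t hs ht => ?_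
  by_contra hcov
  -- `(X ⁻¹' s).indicator 1` is definitionally `fun ω => s.indicator 1 (X ω)`.
  have hpos := renyiCorr_pos_of_covariance_ne_zero (measurable_one.indicator hs)
    (measurable_one.indicator ht) (memLp_indicator_one (hX hs) 2)
    (memLp_indicator_one (hY ht) 2) hcov
  exact hpos.ne' hR
end

section
/- Let X and Y be real-valued random variables, let f_1, f_2, … be a sequence of functions whose linear span is dense in L²(P_X), and let g_1, g_2, … be a sequence of functions whose linear span is dense in L²(P_Y). Define the (K,L) approximate Rényi correlation ρ_{K,L} as the supremum over coefficient vectors α ∈ ℝ^K, β ∈ ℝ^L (for which the resulting variances are positive) of corr(Σ_{k=1}^K α_k f_k(X), Σ_{l=1}^L β_l g_l(Y)). Then ρ_{K,L} → R(X,Y) as K, L → ∞, where R(X,Y) is the Rényi maximal correlation; equivalently, sup_{K,L} ρ_{K,L} = R(X,Y). -/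
open MeasureTheory ProbabilityTheory

/-- The `(K, L)` approximate Rényi correlation determined by function systems
`f`, `g`: the supremum over coefficient vectors (giving positive variances) of the
Pearson correlation of `∑ αₖ fₖ(X)` and `∑ βₗ gₗ(Y)`. -/
noncomputable def approxRenyiCorr {Ω : Type*} [MeasureSpace Ω] (X Y : Ω → ℝ)
    (f g : ℕ → ℝ → ℝ) (K L : ℕ) : ℝ :=
  sSup {r : ℝ | ∃ (α : Fin K → ℝ) (β : Fin L → ℝ),
    0 < Var[fun ω => ∑ k : Fin K, α k * f k (X ω)] ∧
    0 < Var[fun ω => ∑ l : Fin L, β l * g l (Y ω)] ∧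
    r = pearsonCorr (fun ω => ∑ k : Fin K, α k * f k (X ω))
      (fun ω => ∑ l : Fin L, β l * g l (Y ω))}

/-!
The Pearson correlation of `U, V ∈ L²(ℙ)` is the cosine of the angle between the centred
vectors `U - 𝔼 U` and `V - 𝔼 V`, hence a continuous function of `(U, V)` wherever both
variances are positive. Composition with `X` is an isometry `L²(P_X) → L²(ℙ)`, so the finite
combinations `∑ αₖ fₖ(X)` are dense among the `f(X)`, `f ∈ L²(P_X)`, and likewise for `Y`.
By continuity every correlation `corr(f(X), g(Y))` is a limit of approximate correlations,
while conversely every approximate correlation is itself one of the correlations in `R(X, Y)`.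
-/

open scoped RealInnerProductSpace
open InnerProductGeometry Set Filter Topology

section Centering

variable {Ω : Type*} [MeasurableSpace Ω] {μ : Measure Ω} [IsFiniteMeasure μ]

noncomputable def centerL2 (u : Lp ℝ 2 μ) : Lp ℝ 2 μ :=
  u - ⟪Lp.const 2 μ (1 : ℝ), u⟫ • Lp.const 2 μ (1 : ℝ)

lemma continuous_centerL2 : Continuous (centerL2 (μ := μ)) := by
  unfold centerL2; fun_prop

lemma inner_const_one_toLp {U : Ω → ℝ} (hU : MemLp U 2 μ) :
    ⟪Lp.const 2 μ (1 : ℝ), hU.toLp U⟫ = μ[U] := by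
  rw [← indicatorConstLp_univ, L2.inner_indicatorConstLp_one, Measure.restrict_univ]
  exact integral_congr_ae hU.coeFn_toLp

lemma coeFn_centerL2_toLp {U : Ω → ℝ} (hU : MemLp U 2 μ) :
    centerL2 (hU.toLp U) =ᵐ[μ] fun ω => U ω - μ[U] := by
  rw [centerL2, inner_const_one_toLp hU]
  filter_upwards [Lp.coeFn_sub (hU.toLp U) (μ[U] • Lp.const 2 μ (1 : ℝ)),
    Lp.coeFn_smul μ[U] (Lp.const 2 μ (1 : ℝ)), hU.coeFn_toLp,
    Lp.coeFn_const (p := 2) (μ := μ) (1 : ℝ)] with ω h₁ h₂ h₃ h₄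
  rw [h₁, Pi.sub_apply, h₂, h₃, Pi.smul_apply, h₄]
  simp

lemma covariance_eq_inner_centerL2 {U V : Ω → ℝ} (hU : MemLp U 2 μ) (hV : MemLp V 2 μ) :
    cov[U, V; μ] = ⟪centerL2 (hU.toLp U), centerL2 (hV.toLp V)⟫ := by
  rw [covariance, L2.inner_def]
  refine integral_congr_ae ?_
  filter_upwards [coeFn_centerL2_toLp hU, coeFn_centerL2_toLp hV] with ω h₁ h₂
  simp [h₁, h₂, mul_comm]

lemma variance_eq_norm_centerL2_sq {U : Ω → ℝ} (hU : MemLp U 2 μ) :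
    Var[U; μ] = ‖centerL2 (hU.toLp U)‖ ^ 2 := by
  rw [← covariance_self hU.aemeasurable, covariance_eq_inner_centerL2 hU hU,
    real_inner_self_eq_norm_sq]

lemma variance_pos_iff_centerL2_ne_zero {U : Ω → ℝ} (hU : MemLp U 2 μ) :
    0 < Var[U; μ] ↔ centerL2 (hU.toLp U) ≠ 0 := by
  rw [variance_eq_norm_centerL2_sq hU]
  exact sq_pos_iff.trans norm_ne_zero_iff

end Centering

section Pearson

variable {Ω : Type*} [MeasureSpace Ω]

lemma pearsonCorr_eq_cos_angle [IsFiniteMeasure (ℙ : Measure Ω)] {U V : Ω → ℝ}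
    (hU : MemLp U 2 ℙ) (hV : MemLp V 2 ℙ) :
    pearsonCorr U V = Real.cos (angle (centerL2 (hU.toLp U)) (centerL2 (hV.toLp V))) := by
  rw [pearsonCorr, variance_eq_norm_centerL2_sq hU, variance_eq_norm_centerL2_sq hV,
    Real.sqrt_sq (norm_nonneg _), Real.sqrt_sq (norm_nonneg _), cos_angle,
    ← covariance_eq_inner_centerL2 hU hV]
  rfl

lemma abs_pearsonCorr_le_one [IsFiniteMeasure (ℙ : Measure Ω)] {U V : Ω → ℝ}
    (hU : MemLp U 2 ℙ) (hV : MemLp V 2 ℙ) : |pearsonCorr U V| ≤ 1 := by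
  rw [pearsonCorr_eq_cos_angle hU hV]
  exact Real.abs_cos_le_one _

lemma pearsonCorr_fun_neg_left (U V : Ω → ℝ) :
    pearsonCorr (fun ω => -U ω) V = -pearsonCorr U V := by
  change cov[fun ω => -U ω, V] / _ = -(cov[U, V] / _)
  rw [covariance_fun_neg_left, variance_fun_neg, neg_div]

end Pearson

lemma Real.sSup_nonneg_of_neg_mem {s : Set ℝ} (hs : ∀ x ∈ s, -x ∈ s) : 0 ≤ sSup s := by
  obtain rfl | ⟨x, hx⟩ := s.eq_empty_or_nonempty
  · exact Real.sSup_empty.ge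
  · rcases le_total 0 x with h | h
    · exact Real.sSup_nonneg' ⟨x, hx, h⟩
    · exact Real.sSup_nonneg' ⟨-x, hs x hx, neg_nonneg.2 h⟩

lemma Submodule.exists_fin_sum_smul_eq_of_mem_span_range {R M : Type*} [Semiring R]
    [AddCommMonoid M] [Module R M] {v : ℕ → M} {x : M} (hx : x ∈ span R (range v)) :
    ∃ (K : ℕ) (α : Fin K → R), ∑ k, α k • v k = x := by
  obtain ⟨c, rfl⟩ := Finsupp.mem_span_range_iff_exists_finsupp.1 hx
  have hsupp : c.support ⊆ Finset.range (c.support.sup id + 1) := fun k hk =>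
    Finset.mem_range.2 (Nat.lt_succ_of_le (Finset.le_sup (f := id) hk))
  exact ⟨_, fun k => c k, by
    rw [Fin.sum_univ_eq_sum_range (fun k => c k • v k),
      Finsupp.sum_of_support_subset c hsupp _ (by simp)]⟩

lemma MeasureTheory.MemLp.toLp_sum_const_mul {α ι : Type*} [MeasurableSpace α] {μ : Measure α}
    {p : ENNReal} (s : Finset ι) {F : ι → α → ℝ} (hF : ∀ i, MemLp (F i) p μ) (c : ι → ℝ)
    (hsum : MemLp (fun x => ∑ i ∈ s, c i * F i x) p μ) :
    hsum.toLp _ = ∑ i ∈ s, c i • (hF i).toLp (F i) := by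
  have hterm : ∀ᵐ x ∂μ, ∀ i ∈ s, (c i • (hF i).toLp (F i)) x = c i * F i x := by
    refine (eventually_all_finset s).2 fun i _ => ?_
    filter_upwards [Lp.coeFn_smul (c i) ((hF i).toLp (F i)), (hF i).coeFn_toLp] with x h₁ h₂
    simp [h₁, h₂]
  refine Lp.ext ?_
  filter_upwards [hsum.coeFn_toLp, Lp.coeFn_fun_finsetSum s fun i => c i • (hF i).toLp (F i),
    hterm] with x h₁ h₂ h₃
  rw [h₁, h₂]
  exact (Finset.sum_congr rfl h₃).symm

section Composition

variable {Ω : Type*} [MeasurableSpace Ω] {μ : Measure Ω} {X : Ω → ℝ} {f : ℕ → ℝ → ℝ}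

lemma memLp_sum_comp (hX : Measurable X) (hf2 : ∀ k, MemLp (f k) 2 (μ.map X)) {K : ℕ}
    (α : Fin K → ℝ) : MemLp (fun ω => ∑ k : Fin K, α k * f k (X ω)) 2 μ :=
  memLp_finsetSum _ fun k _ =>
    ((hf2 k).comp_measurePreserving (hX.measurePreserving μ)).const_mul (α k)

lemma toLp_comp_mem_closure_range_toLp_sum (hX : Measurable X)
    (hf2 : ∀ k, MemLp (f k) 2 (μ.map X))
    (hdense : Dense (Submodule.span ℝ (range fun k => (hf2 k).toLp (f k)) :
      Set (Lp ℝ 2 (μ.map X))))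
    {f₀ : ℝ → ℝ} (hf₀ : AEStronglyMeasurable f₀ (μ.map X))
    (hU : MemLp (fun ω => f₀ (X ω)) 2 μ) :
    hU.toLp _ ∈ closure (range fun Kα : Σ K, Fin K → ℝ => (memLp_sum_comp hX hf2 Kα.2).toLp _) := by
  set Φ := Lp.compMeasurePreservingₗᵢ ℝ X (hX.measurePreserving μ) (E := ℝ) (p := 2)
  have hf₀2 : MemLp f₀ 2 (μ.map X) := (memLp_map_measure_iff hf₀ hX.aemeasurable).2 hU
  have himage : Φ '' Submodule.span ℝ (range fun k => (hf2 k).toLp (f k)) ⊆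
      range fun Kα : Σ K, Fin K → ℝ => (memLp_sum_comp hX hf2 Kα.2).toLp _ := by
    rintro _ ⟨p, hp, rfl⟩
    obtain ⟨K, α, rfl⟩ := Submodule.exists_fin_sum_smul_eq_of_mem_span_range hp
    refine ⟨⟨K, α⟩, ?_⟩
    rw [← MemLp.toLp_sum_const_mul Finset.univ (F := fun k : Fin K => f k) (fun k => hf2 k) α
      (memLp_finsetSum _ fun k _ => (hf2 k).const_mul (α k))]
    rfl
  show Φ (hf₀2.toLp f₀) ∈ _
  exact closure_mono himage <| image_closure_subset_closure_image Φ.continuous <|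
    mem_image_of_mem _ (hdense.closure_eq ▸ mem_univ _)

end Composition

lemma cos_angle_le_of_mem_closure {E F : Type*} [TopologicalSpace E] [NormedAddCommGroup F]
    [InnerProductSpace ℝ F] {c : E → F} (hc : Continuous c) {A B : Set E} {u v : E}
    (hu : u ∈ closure A) (hv : v ∈ closure B) (hcu : c u ≠ 0) (hcv : c v ≠ 0) {D : ℝ}
    (hD : ∀ a ∈ A, ∀ b ∈ B, c a ≠ 0 → c b ≠ 0 → Real.cos (angle (c a) (c b)) ≤ D) :
    Real.cos (angle (c u) (c v)) ≤ D := by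
  have hclosure : (𝓝[A ×ˢ B] (u, v)).NeBot :=
    mem_closure_iff_nhdsWithin_neBot.1 (by rw [closure_prod_eq]; exact ⟨hu, hv⟩)
  have hangle : ContinuousAt (fun w : E × E => angle (c w.1) (c w.2)) (u, v) :=
    ContinuousAt.comp (g := fun y : F × F => angle y.1 y.2) (f := Prod.map c c) (x := (u, v))
      (continuousAt_angle hcu hcv) (hc.prodMap hc).continuousAt
  have hcont := Real.continuous_cos.continuousAt.comp hangle
  have hne : ∀ᶠ w in 𝓝 (u, v), c w.1 ≠ 0 ∧ c w.2 ≠ 0 :=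
    ((hc.comp continuous_fst).continuousAt (x := (u, v)) |>.eventually_ne hcu).and
      ((hc.comp continuous_snd).continuousAt (x := (u, v)) |>.eventually_ne hcv)
  refine le_of_tendsto (hcont.tendsto.mono_left (nhdsWithin_le_nhds (s := A ×ˢ B))) ?_
  filter_upwards [nhdsWithin_le_nhds hne, self_mem_nhdsWithin] with w hw hwAB
  exact hD _ hwAB.1 _ hwAB.2 hw.1 hw.2

lemma pearsonCorr_comp_le_of_dense {Ω : Type*} [MeasureSpace Ω] [IsFiniteMeasure (ℙ : Measure Ω)]
    {X Y : Ω → ℝ} (hX : Measurable X) (hY : Measurable Y) {f g : ℕ → ℝ → ℝ}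
    (hf2 : ∀ k, MemLp (f k) 2 (Measure.map X ℙ)) (hg2 : ∀ l, MemLp (g l) 2 (Measure.map Y ℙ))
    (hfdense : Dense (Submodule.span ℝ (range fun k => (hf2 k).toLp (f k)) :
      Set (Lp ℝ 2 (Measure.map X ℙ))))
    (hgdense : Dense (Submodule.span ℝ (range fun l => (hg2 l).toLp (g l)) :
      Set (Lp ℝ 2 (Measure.map Y ℙ))))
    {f₀ g₀ : ℝ → ℝ} (hf₀ : AEStronglyMeasurable f₀ (Measure.map X ℙ))
    (hg₀ : AEStronglyMeasurable g₀ (Measure.map Y ℙ))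
    (hU : MemLp (fun ω => f₀ (X ω)) 2 ℙ) (hV : MemLp (fun ω => g₀ (Y ω)) 2 ℙ)
    (hvarU : 0 < Var[fun ω => f₀ (X ω)]) (hvarV : 0 < Var[fun ω => g₀ (Y ω)]) {D : ℝ}
    (hD : ∀ (K L : ℕ) (α : Fin K → ℝ) (β : Fin L → ℝ),
      0 < Var[fun ω => ∑ k : Fin K, α k * f k (X ω)] →
      0 < Var[fun ω => ∑ l : Fin L, β l * g l (Y ω)] →
      pearsonCorr (fun ω => ∑ k : Fin K, α k * f k (X ω))
        (fun ω => ∑ l : Fin L, β l * g l (Y ω)) ≤ D) :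
    pearsonCorr (fun ω => f₀ (X ω)) (fun ω => g₀ (Y ω)) ≤ D := by
  rw [pearsonCorr_eq_cos_angle hU hV]
  refine cos_angle_le_of_mem_closure continuous_centerL2
    (toLp_comp_mem_closure_range_toLp_sum hX hf2 hfdense hf₀ hU)
    (toLp_comp_mem_closure_range_toLp_sum hY hg2 hgdense hg₀ hV)
    ((variance_pos_iff_centerL2_ne_zero hU).1 hvarU)
    ((variance_pos_iff_centerL2_ne_zero hV).1 hvarV) ?_
  rintro _ ⟨⟨K, α⟩, rfl⟩ _ ⟨⟨L, β⟩, rfl⟩ hα hβ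
  rw [← pearsonCorr_eq_cos_angle]
  exact hD K L α β ((variance_pos_iff_centerL2_ne_zero _).2 hα)
    ((variance_pos_iff_centerL2_ne_zero _).2 hβ)

section Renyi

variable {Ω : Type*} [MeasureSpace Ω]

lemma pearsonCorr_le_renyiCorr_s8 [IsFiniteMeasure (ℙ : Measure Ω)] {X Y : Ω → ℝ}
    {f₀ g₀ : ℝ → ℝ} (hf₀ : Measurable f₀) (hg₀ : Measurable g₀)
    (hU : MemLp (fun ω => f₀ (X ω)) 2 ℙ) (hV : MemLp (fun ω => g₀ (Y ω)) 2 ℙ)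
    (hvarU : 0 < Var[fun ω => f₀ (X ω)]) (hvarV : 0 < Var[fun ω => g₀ (Y ω)]) :
    pearsonCorr (fun ω => f₀ (X ω)) (fun ω => g₀ (Y ω)) ≤ renyiCorr X Y := by
  refine le_csSup ⟨1, ?_⟩ ⟨f₀, g₀, hf₀, hg₀, hU, hV, hvarU, hvarV, rfl⟩
  rintro _ ⟨_, _, -, -, hU', hV', -, -, rfl⟩
  exact (le_abs_self _).trans (abs_pearsonCorr_le_one hU' hV')

lemma renyiCorr_nonneg (X Y : Ω → ℝ) : 0 ≤ renyiCorr X Y := by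
  refine Real.sSup_nonneg_of_neg_mem ?_
  rintro _ ⟨f₀, g₀, hf₀, hg₀, hU, hV, hvarU, hvarV, rfl⟩
  refine ⟨fun x => -f₀ x, g₀, hf₀.neg, hg₀, hU.neg, hV, ?_, hvarV,
    (pearsonCorr_fun_neg_left _ _).symm⟩
  exact variance_fun_neg.trans_gt hvarU

lemma approxRenyiCorr_zero_left (X Y : Ω → ℝ) (f g : ℕ → ℝ → ℝ) (L : ℕ) :
    approxRenyiCorr X Y f g 0 L = 0 := by
  simp [approxRenyiCorr, ← Pi.zero_def]

variable [IsFiniteMeasure (ℙ : Measure Ω)] {X Y : Ω → ℝ} {f g : ℕ → ℝ → ℝ}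

lemma pearsonCorr_le_approxRenyiCorr (hX : Measurable X) (hY : Measurable Y)
    (hf2 : ∀ k, MemLp (f k) 2 (Measure.map X ℙ)) (hg2 : ∀ l, MemLp (g l) 2 (Measure.map Y ℙ))
    {K L : ℕ} {α : Fin K → ℝ} {β : Fin L → ℝ}
    (hα : 0 < Var[fun ω => ∑ k : Fin K, α k * f k (X ω)])
    (hβ : 0 < Var[fun ω => ∑ l : Fin L, β l * g l (Y ω)]) :
    pearsonCorr (fun ω => ∑ k : Fin K, α k * f k (X ω))
      (fun ω => ∑ l : Fin L, β l * g l (Y ω)) ≤ approxRenyiCorr X Y f g K L := by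
  refine le_csSup ⟨1, ?_⟩ ⟨α, β, hα, hβ, rfl⟩
  rintro _ ⟨α', β', -, -, rfl⟩
  exact (le_abs_self _).trans
    (abs_pearsonCorr_le_one (memLp_sum_comp hX hf2 α') (memLp_sum_comp hY hg2 β'))

lemma approxRenyiCorr_le_renyiCorr (hX : Measurable X) (hY : Measurable Y)
    (hf : ∀ k, Measurable (f k)) (hg : ∀ l, Measurable (g l))
    (hf2 : ∀ k, MemLp (f k) 2 (Measure.map X ℙ)) (hg2 : ∀ l, MemLp (g l) 2 (Measure.map Y ℙ))
    (K L : ℕ) : approxRenyiCorr X Y f g K L ≤ renyiCorr X Y := by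
  refine Real.sSup_le ?_ (renyiCorr_nonneg X Y)
  rintro _ ⟨α, β, hα, hβ, rfl⟩
  exact pearsonCorr_le_renyiCorr_s8 (f₀ := fun x => ∑ k, α k * f k x)
    (g₀ := fun y => ∑ l, β l * g l y) (Finset.measurable_fun_sum _ fun k _ => (hf k).const_mul _)
    (Finset.measurable_fun_sum _ fun l _ => (hg l).const_mul _)
    (memLp_sum_comp hX hf2 α) (memLp_sum_comp hY hg2 β) hα hβ

end Renyi

/-- If the linear spans of `(fₖ)` and `(gₗ)` are dense in `L²(P_X)` and `L²(P_Y)`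
respectively, then the `(K, L)` approximate Rényi correlations converge (as a
supremum over `K, L`) to the Rényi maximal correlation. -/
theorem iSup_approxRenyiCorr_eq_renyiCorr {Ω : Type*} [MeasureSpace Ω]
    [IsProbabilityMeasure (ℙ : Measure Ω)] (X Y : Ω → ℝ)
    (hX : Measurable X) (hY : Measurable Y)
    (f g : ℕ → ℝ → ℝ)
    (hf : ∀ k, Measurable (f k)) (hg : ∀ l, Measurable (g l))
    (hf2 : ∀ k, MemLp (f k) 2 (Measure.map X ℙ))
    (hg2 : ∀ l, MemLp (g l) 2 (Measure.map Y ℙ))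
    (hfdense : Dense (↑(Submodule.span ℝ
      (Set.range fun k => MemLp.toLp (f k) (hf2 k))) :
      Set (Lp ℝ 2 (Measure.map X ℙ))))
    (hgdense : Dense (↑(Submodule.span ℝ
      (Set.range fun l => MemLp.toLp (g l) (hg2 l))) :
      Set (Lp ℝ 2 (Measure.map Y ℙ)))) :
    ⨆ K : ℕ, ⨆ L : ℕ, approxRenyiCorr X Y f g K L = renyiCorr X Y := by
  have hle := approxRenyiCorr_le_renyiCorr hX hY hf hg hf2 hg2
  have hbddL : ∀ K, BddAbove (range fun L => approxRenyiCorr X Y f g K L) :=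
    fun K => ⟨_, forall_mem_range.2 (hle K)⟩
  have hbddK : BddAbove (range fun K => ⨆ L, approxRenyiCorr X Y f g K L) :=
    ⟨_, forall_mem_range.2 fun K => ciSup_le (hle K)⟩
  refine le_antisymm (ciSup_le fun K => ciSup_le (hle K)) (Real.sSup_le ?_ ?_)
  · rintro _ ⟨f₀, g₀, hf₀, hg₀, hU, hV, hvarU, hvarV, rfl⟩
    refine pearsonCorr_comp_le_of_dense hX hY hf2 hg2 hfdense hgdense hf₀.aestronglyMeasurable
      hg₀.aestronglyMeasurable hU hV hvarU hvarV fun K L α β hα hβ => ?_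
    calc _ ≤ approxRenyiCorr X Y f g K L := pearsonCorr_le_approxRenyiCorr hX hY hf2 hg2 hα hβ
      _ ≤ ⨆ L, approxRenyiCorr X Y f g K L := le_ciSup (hbddL K) L
      _ ≤ _ := le_ciSup hbddK K
  · exact Real.iSup_nonneg' ⟨0, Real.iSup_nonneg' ⟨0, (approxRenyiCorr_zero_left X Y f g 0).ge⟩⟩
end
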